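/- arXiv:1308.6255 — 4 statements merged into one kernel-verified Lean document; each statement's English description precedes it below -/
import Mathlib

section
/- For the externality-free weights α^free, the extended Shapley value φ^{α^free}_i(v) equals the classical Shapley value of the characteristic-function game v̂(S) := v(S, P^sing_S), where P^sing_S is the partition consisting of S together with singletons of N\S. -/
open Finset

open scoped Classical

/-- A partition of the player set `Fin n`; following the paper's convention,
`∅` is a member of every partition. -/
def IsPartition {n : ℕ} (P : Finset (Finset (Fin n))) : Prop :=
  ∅ ∈ P ∧ ∀ a : Fin n, ∃! B : Finset (Fin n), B ∈ P ∧ a ∈ B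

/-- The set `𝒫` of all partitions of `Fin n`. -/
noncomputable def allPartitions (n : ℕ) : Finset (Finset (Finset (Fin n))) :=
  Finset.univ.filter IsPartition

/-- `C_i^π`: the set of players appearing after `i` in the ordering `π`. -/
def Cafter {n : ℕ} (π : Equiv.Perm (Fin n)) (i : Fin n) : Finset (Fin n) :=
  Finset.univ.filter fun j => π.symm i < π.symm j

/-- `P_{[S]}` : the partition obtained from `P` by merging all members of `S`
into a single coalition. -/
def pmerge {n : ℕ} (P : Finset (Finset (Fin n))) (S : Finset (Fin n)) :
    Finset (Finset (Fin n)) :=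
  P.image (· \ S) ∪ {S}

/-- `τ_i^T(P)` : the partition obtained from `P` by transferring `i` from its
coalition to the coalition `T` (taking `T = ∅` means that `i` forms a new
singleton coalition). -/
def moveTo {n : ℕ} (P : Finset (Finset (Fin n))) (i : Fin n) (T : Finset (Fin n)) :
    Finset (Finset (Fin n)) :=
  ((P.erase T).image fun B => B.erase i) ∪ {insert i T} ∪ {∅}

/-- A partition-function game: a real value for every (embedded) coalition. -/
abbrev Game (n : ℕ) := Finset (Fin n) → Finset (Finset (Fin n)) → ℝ

/-- A system of weights `α_i(S, P)` (meaningful for `i ∉ S`). -/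
abbrev Weights (n : ℕ) := Fin n → Finset (Fin n) → Finset (Finset (Fin n)) → ℝ

/-- The partition `{N, ∅}` in which the grand coalition is embedded. -/
def grandPart (n : ℕ) : Finset (Finset (Fin n)) := {Finset.univ, ∅}

/-- Normalization: for every embedded coalition `(S, P)` with `i ∈ S`,
`∑_{T ∈ P_{−S}} α_i(S_{−i}, τ_i^T(P)) = 1`. -/
def Normalized {n : ℕ} (w : Weights n) : Prop :=
  ∀ (i : Fin n) (S : Finset (Fin n)) (P : Finset (Finset (Fin n))),
    IsPartition P → S ∈ P → i ∈ S →
      ∑ T ∈ P.erase S, w i (S.erase i) (moveTo P i T) = 1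

/-- Weights take values in `[0, 1]`. -/
def InRange {n : ℕ} (w : Weights n) : Prop :=
  ∀ (i : Fin n) (S : Finset (Fin n)) (P : Finset (Finset (Fin n))),
    i ∉ S → 0 ≤ w i S P ∧ w i S P ≤ 1

/-- `pr^α_π(P) = ∏_{i ∈ N} α_i(C_i^π, P_{[C_i^π]})`. -/
noncomputable def pr {n : ℕ} (w : Weights n) (π : Equiv.Perm (Fin n))
    (P : Finset (Finset (Fin n))) : ℝ :=
  ∏ i : Fin n, w i (Cafter π i) (pmerge P (Cafter π i))

/-- The extended Shapley value `φ^α` (formula (1) of the paper). -/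
noncomputable def esv {n : ℕ} (w : Weights n) (v : Game n) (i : Fin n) : ℝ :=
  ((n.factorial : ℝ))⁻¹ * ∑ π : Equiv.Perm (Fin n), ∑ P ∈ allPartitions n,
    pr w π P *
      (v (insert i (Cafter π i)) (pmerge P (insert i (Cafter π i))) -
        v (Cafter π i) (pmerge P (Cafter π i)))

/-- The `α`-marginal contribution `[mc^α_i(v)](S, P)`. -/
noncomputable def mc {n : ℕ} (w : Weights n) (v : Game n) (i : Fin n)
    (S : Finset (Fin n)) (P : Finset (Finset (Fin n))) : ℝ :=
  ∑ T ∈ P.erase S, w i (S.erase i) (moveTo P i T) * (v S P - v (S.erase i) (moveTo P i T))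

/-- A genuine partition-function game: it vanishes off embedded coalitions
(and on the empty coalition). -/
def IsGame {n : ℕ} (v : Game n) : Prop :=
  ∀ S P, ¬ (IsPartition P ∧ S ∈ P ∧ S ≠ ∅) → v S P = 0

/-- The simple game `e^{(S₀, P₀)}`. -/
noncomputable def sgame {n : ℕ} (S₀ : Finset (Fin n)) (P₀ : Finset (Finset (Fin n))) :
    Game n :=
  fun S P => if S = S₀ ∧ P = P₀ then 1 else 0

/-- The permuted game `π(v)`, with `π(v)(S, P) = v(π(S), π(P))`. -/
def permGame {n : ℕ} (π : Equiv.Perm (Fin n)) (v : Game n) : Game n :=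
  fun S P => v (S.image π) (P.image (Finset.image π))

/-- The externality-free weights of Pham Do and Norde. -/
noncomputable def wfree (n : ℕ) : Weights n :=
  fun i _S P => if ({i} : Finset (Fin n)) ∈ P then 1 else 0

/-- `P^sing_S`: the partition consisting of `S` together with the singletons
of `N ∖ S` (and `∅`). -/
noncomputable def singPartOf {n : ℕ} (S : Finset (Fin n)) : Finset (Finset (Fin n)) :=
  insert ∅ (insert S ((Finset.univ \ S).image fun j : Fin n => ({j} : Finset (Fin n))))

noncomputable def Psing (n : ℕ) : Finset (Finset (Fin n)) :=
  insert ∅ (Finset.univ.image fun a : Fin n => ({a} : Finset (Fin n)))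

lemma notmem_Cafter {n} (π : Equiv.Perm (Fin n)) (i : Fin n) : i ∉ Cafter π i := by
  simp [Cafter]

lemma pmerge_Psing {n : ℕ} (S : Finset (Fin n)) : pmerge (Psing n) S = singPartOf S := by
  ext x
  simp only [pmerge, Psing, singPartOf, mem_union, mem_image, mem_insert, mem_singleton,
    mem_sdiff, mem_univ, true_and]
  constructor
  · rintro (⟨B, (rfl | ⟨a, rfl⟩), rfl⟩ | rfl)
    · simp
    · by_cases h : a ∈ S
      · left; simp [Finset.sdiff_eq_empty_iff_subset, h]
      · right; right; exact ⟨a, h, (Finset.sdiff_eq_self_iff_disjoint.mpr (by simp [h])).symm⟩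
    · right; left; rfl
  · rintro (rfl | rfl | ⟨a, ha, rfl⟩)
    · exact Or.inl ⟨∅, Or.inl rfl, by simp⟩
    · exact Or.inr rfl
    · exact Or.inl ⟨{a}, Or.inr ⟨a, rfl⟩, by simp [Finset.sdiff_eq_self_iff_disjoint, ha]⟩

lemma isPartition_Psing (n : ℕ) : IsPartition (Psing n) := by
  constructor
  · simp [Psing]
  · intro a
    refine ⟨{a}, ⟨by simp [Psing], by simp⟩, ?_⟩
    rintro B ⟨hB, haB⟩
    simp only [Psing, mem_insert, mem_image, mem_univ, true_and] at hB
    rcases hB with rfl | ⟨b, rfl⟩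
    · simp at haB
    · simp at haB; simp [haB]

lemma pr_Psing {n : ℕ} (π : Equiv.Perm (Fin n)) : pr (wfree n) π (Psing n) = 1 := by
  unfold pr
  rw [Finset.prod_eq_one]
  intro j _
  have : ({j} : Finset (Fin n)) ∈ pmerge (Psing n) (Cafter π j) := by
    rw [pmerge_Psing]
    simp only [singPartOf, mem_insert, mem_image, mem_sdiff, mem_univ, true_and]
    exact Or.inr (Or.inr ⟨j, notmem_Cafter π j, rfl⟩)
  simp [wfree, this]

lemma pr_eq_zero {n : ℕ} (π : Equiv.Perm (Fin n)) (P : Finset (Finset (Fin n)))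
    (hP : IsPartition P) (hne : P ≠ Psing n) : pr (wfree n) π P = 0 := by
  by_contra h
  apply hne
  rw [pr] at h
  replace h := Finset.prod_ne_zero_iff.mp h
  have hsing : ∀ j : Fin n, ({j} : Finset (Fin n)) ∈ P := by
    have key : ∀ m : ℕ, ∀ j : Fin n, (Cafter π j).card = m → ({j} : Finset (Fin n)) ∈ P := by
      intro m
      induction m using Nat.strong_induction_on with
      | _ m ih =>
        intro j hcard
        have hj := h j (mem_univ j)
        simp only [wfree, ite_eq_right_iff, not_forall] at hj
        have hmem : ({j} : Finset (Fin n)) ∈ pmerge P (Cafter π j) := by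
          by_contra hc; simp [wfree, hc] at hj
        rw [pmerge, mem_union, mem_singleton] at hmem
        rcases hmem with hmem | hmem
        · rw [mem_image] at hmem
          obtain ⟨B, hB, hBe⟩ := hmem
          have hjB : j ∈ B := by
            have : j ∈ B \ Cafter π j := hBe ▸ mem_singleton_self j
            exact (mem_sdiff.mp this).1
          -- show B = {j}
          have : B = {j} := by
            apply Finset.eq_singleton_iff_unique_mem.mpr
            refine ⟨hjB, ?_⟩
            intro x hxB
            by_contra hx
            have hxC : x ∈ Cafter π j := by
              by_contra hxC
              have : x ∈ B \ Cafter π j := mem_sdiff.mpr ⟨hxB, hxC⟩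
              rw [hBe, mem_singleton] at this
              exact hx this
            -- x comes after j, so {x} ∈ P by induction
            have hlt : (Cafter π x).card < m := by
              rw [← hcard]
              apply Finset.card_lt_card
              constructor
              · intro y hy
                simp only [Cafter, mem_filter, mem_univ, true_and] at *
                exact lt_trans hxC hy
              · intro hsub
                have := hsub hxC
                exact notmem_Cafter π x this
            have hxP : ({x} : Finset (Fin n)) ∈ P := ih _ hlt x rfl
            obtain ⟨U, _, hU⟩ := hP.2 x
            have e1 := hU B ⟨hB, hxB⟩
            have e2 := hU {x} ⟨hxP, mem_singleton_self x⟩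
            have eBx : B = {x} := e1.trans e2.symm
            rw [eBx, mem_singleton] at hjB
            exact hx hjB.symm
          rwa [this] at hB
        · exact absurd (hmem ▸ mem_singleton_self j : j ∈ Cafter π j) (notmem_Cafter π j)
    exact fun j => key _ j rfl
  -- P = Psing n
  apply Finset.Subset.antisymm
  · intro B hB
    rcases Finset.eq_empty_or_nonempty B with rfl | ⟨a, ha⟩
    · simp [Psing]
    · obtain ⟨U, _, hU⟩ := hP.2 a
      have e1 := hU B ⟨hB, ha⟩
      have e2 := hU {a} ⟨hsing a, mem_singleton_self a⟩
      rw [e1.trans e2.symm]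
      simp [Psing]
  · intro B hB
    simp only [Psing, mem_insert, mem_image, mem_univ, true_and] at hB
    rcases hB with rfl | ⟨a, rfl⟩
    · exact hP.1
    · exact hsing a

/-- For the externality-free weights, the extended Shapley value equals the
classical Shapley value of the characteristic-function game
`v̂(S) := v(S, P^sing_S)`. -/
theorem stmt13 (n : ℕ) (v : Game n) (i : Fin n) :
    esv (wfree n) v i =
      ((n.factorial : ℝ))⁻¹ * ∑ π : Equiv.Perm (Fin n),
        (v (insert i (Cafter π i)) (singPartOf (insert i (Cafter π i))) -
          v (Cafter π i) (singPartOf (Cafter π i))) := by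
  unfold esv
  congr 1
  apply Finset.sum_congr rfl
  intro π _
  rw [Finset.sum_eq_single (Psing n)]
  · rw [pr_Psing, pmerge_Psing, pmerge_Psing, one_mul]
  · intro P hPmem hne
    have hP : IsPartition P := (Finset.mem_filter.mp hPmem).2
    rw [pr_eq_zero π P hP hne, zero_mul]
  · intro hmem
    exact absurd (Finset.mem_filter.mpr ⟨Finset.mem_univ _, isPartition_Psing n⟩) hmem
end

section
/- Under the Macho-Stadler et al. weights, for every permutation π the induced probability of a partition P is pr^{α^{MSt}}_π(P) = (Π_{T∈P, T≠∅} (|T|−1)!)/|N|!, which equals the probability that a uniformly random permutation of N has cycle-type partition P (i.e., its decomposition into disjoint cycles induces the set partition P). -/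
open Finset

open scoped Classical

/-- The block of `P` containing `i`. -/
noncomputable def blockOf {n : ℕ} (P : Finset (Finset (Fin n))) (i : Fin n) :
    Finset (Fin n) :=
  (P.filter fun B => i ∈ B).sup id

/-- The Macho-Stadler et al. weights. -/
noncomputable def wMSt (n : ℕ) : Weights n := fun i S P =>
  if 1 < (blockOf P i).card then
    (((blockOf P i).card : ℝ) - 1) / ((n : ℝ) - (S.card : ℝ))
  else 1 / ((n : ℝ) - (S.card : ℝ))

/-- The partition of `Fin n` into the orbits (cycles) of a permutation `σ`
(together with `∅`). -/
noncomputable def cyclePartition {n : ℕ} (σ : Equiv.Perm (Fin n)) :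
    Finset (Finset (Fin n)) :=
  insert ∅ (Finset.univ.image fun i : Fin n =>
    Finset.univ.filter fun j : Fin n => σ.SameCycle i j)

/-!
Player `i` at position `k` of the order `π` faces `n - |C_i| = k` and, in `P_{[C_i]}`, its own
block with all later players removed. So if `i` is the `m`-th member of its block in `π`-order,
its weight is `max (m - 1) 1 / k`. Over all players the denominators multiply to `n!`, and each
block `T` contributes `1 · 1 · 2 ⋯ (|T| - 1) = (|T| - 1)!`.

On the other side, a permutation whose orbits are the blocks of `P` is the same as a choice of a
single cycle through each block, and a set of size `m` carries `(m - 1)!` such cycles.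
-/

namespace IsPartition

variable {n : ℕ} {P : Finset (Finset (Fin n))}

theorem blockOf_eq (hP : IsPartition P) {B : Finset (Fin n)} {a : Fin n} (hB : B ∈ P)
    (ha : a ∈ B) : blockOf P a = B := by
  obtain ⟨C, -, hC⟩ := hP.2 a
  have hfilter : P.filter (fun D => a ∈ D) = {B} := by
    ext D
    simp only [mem_filter, mem_singleton]
    exact ⟨fun hD => (hC D hD).trans (hC B ⟨hB, ha⟩).symm, fun h => h ▸ ⟨hB, ha⟩⟩
  rw [blockOf, hfilter, sup_singleton, id]

theorem blockOf_mem (hP : IsPartition P) (a : Fin n) : blockOf P a ∈ P := by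
  obtain ⟨C, ⟨hC, haC⟩, -⟩ := hP.2 a
  rwa [hP.blockOf_eq hC haC]

theorem mem_blockOf (hP : IsPartition P) (a : Fin n) : a ∈ blockOf P a := by
  obtain ⟨C, ⟨hC, haC⟩, -⟩ := hP.2 a
  rwa [hP.blockOf_eq hC haC]

theorem blockOf_mem_erase_empty (hP : IsPartition P) (a : Fin n) :
    blockOf P a ∈ P.erase ∅ :=
  mem_erase.2 ⟨ne_empty_of_mem (hP.mem_blockOf a), hP.blockOf_mem a⟩

theorem mem_blockOf_iff (hP : IsPartition P) {a b : Fin n} :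
    b ∈ blockOf P a ↔ blockOf P a = blockOf P b :=
  ⟨fun hb => (hP.blockOf_eq (hP.blockOf_mem a) hb).symm, fun h => h ▸ hP.mem_blockOf b⟩

theorem filter_blockOf_eq (hP : IsPartition P) {B : Finset (Fin n)} (hB : B ∈ P) :
    univ.filter (fun a => blockOf P a = B) = B := by
  ext a
  simp only [mem_filter, mem_univ, true_and]
  exact ⟨fun h => h ▸ hP.mem_blockOf a, hP.blockOf_eq hB⟩

theorem insert_empty_image_blockOf (hP : IsPartition P) :
    insert ∅ (univ.image (blockOf P)) = P := by
  ext B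
  simp only [mem_insert, mem_image, mem_univ, true_and]
  constructor
  · rintro (rfl | ⟨a, rfl⟩)
    exacts [hP.1, hP.blockOf_mem a]
  · intro hB
    obtain rfl | ⟨a, ha⟩ := B.eq_empty_or_nonempty
    exacts [Or.inl rfl, Or.inr ⟨a, hP.blockOf_eq hB ha⟩]

theorem blockOf_pmerge (hP : IsPartition P) {S : Finset (Fin n)} {a : Fin n} (ha : a ∉ S) :
    blockOf (pmerge P S) a = blockOf P a \ S := by
  have hfilter : (pmerge P S).filter (fun D => a ∈ D) = {blockOf P a \ S} := by
    ext D
    simp only [pmerge, mem_filter, mem_union, mem_image, mem_singleton]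
    constructor
    · rintro ⟨⟨B, hB, rfl⟩ | rfl, haD⟩
      · rw [hP.blockOf_eq hB (mem_sdiff.1 haD).1]
      · exact absurd haD ha
    · rintro rfl
      exact ⟨Or.inl ⟨_, hP.blockOf_mem a, rfl⟩, mem_sdiff.2 ⟨hP.mem_blockOf a, ha⟩⟩
  rw [blockOf, hfilter, sup_singleton, id]

end IsPartition

theorem Finset.prod_card_filter_le_apply {ι β M : Type*} [LinearOrder β] [CommMonoid M]
    {r : ι → β} (hr : Function.Injective r) (s : Finset ι) (h : ℕ → M) :
    ∏ x ∈ s, h (s.filter fun y => r y ≤ r x).card = ∏ m ∈ range s.card, h (m + 1) := by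
  induction s using Finset.induction_on_max_value r with
  | empty => simp
  | insert a s ha hmax ih =>
    have hfilter_a : (insert a s).filter (fun y => r y ≤ r a) = insert a s :=
      filter_true_of_mem fun y hy => (mem_insert.1 hy).elim (fun h => h ▸ le_rfl) (hmax y)
    have hfilter_s : ∀ x ∈ s,
        (insert a s).filter (fun y => r y ≤ r x) = s.filter fun y => r y ≤ r x := by
      intro x hx
      have hax : ¬ r a ≤ r x := fun hax => ha (hr (le_antisymm hax (hmax x hx)) ▸ hx)
      rw [filter_insert, if_neg hax]
    rw [prod_insert ha, hfilter_a, prod_congr rfl fun x hx => by rw [hfilter_s x hx], ih,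
      card_insert_of_notMem ha, prod_range_succ, mul_comm]

def wMStNumerator (m : ℕ) : ℝ := if 1 < m then (m : ℝ) - 1 else 1

theorem wMSt_eq_div {n : ℕ} (i : Fin n) (S : Finset (Fin n)) (P : Finset (Finset (Fin n))) :
    wMSt n i S P = wMStNumerator (blockOf P i).card / ((n : ℝ) - S.card) :=
  (ite_div _ _ _ _).symm

theorem prod_range_wMStNumerator (k : ℕ) :
    ∏ m ∈ range k, wMStNumerator (m + 1) = ((k - 1).factorial : ℝ) := by
  induction k with
  | zero => simp
  | succ k ih =>
    rw [prod_range_succ, ih]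
    rcases k with _ | k
    · simp [wMStNumerator]
    · simp [wMStNumerator, Nat.factorial_succ, mul_comm]

section Cafter

variable {n : ℕ} (π : Equiv.Perm (Fin n)) (i : Fin n)

theorem notMem_Cafter : i ∉ Cafter π i := by
  simp [Cafter]

theorem card_Cafter : (Cafter π i).card = n - 1 - π.symm i := by
  rw [← Fin.card_Ioi, ← card_map π.symm.toEmbedding]
  congr 1
  ext j
  simp [Cafter]

theorem natCast_sub_card_Cafter : (n : ℝ) - (Cafter π i).card = (π.symm i : ℕ) + 1 := by
  have := (π.symm i).isLt
  rw [card_Cafter, Nat.cast_sub (by omega), Nat.cast_sub (by omega)]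
  push_cast
  ring

theorem sdiff_Cafter (B : Finset (Fin n)) :
    B \ Cafter π i = B.filter fun j => π.symm j ≤ π.symm i := by
  ext j
  simp [Cafter]

end Cafter

theorem prod_natCast_symm_add_one {n : ℕ} (π : Equiv.Perm (Fin n)) :
    ∏ i, ((π.symm i : ℕ) + 1 : ℝ) = n.factorial := by
  rw [Equiv.prod_comp π.symm fun j : Fin n => ((j : ℕ) + 1 : ℝ),
    Fin.prod_univ_eq_prod_range (fun j => (j + 1 : ℝ)), ← Finset.prod_range_add_one_eq_factorial]
  push_cast
  rfl

theorem pr_wMSt {n : ℕ} (π : Equiv.Perm (Fin n)) {P : Finset (Finset (Fin n))}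
    (hP : IsPartition P) :
    pr (wMSt n) π P = (∏ T ∈ P.erase ∅, ((T.card - 1).factorial : ℝ)) / n.factorial := by
  have hfactor : ∀ i, wMSt n i (Cafter π i) (pmerge P (Cafter π i)) =
      wMStNumerator (blockOf P i \ Cafter π i).card / ((π.symm i : ℕ) + 1) := fun i => by
    rw [wMSt_eq_div, hP.blockOf_pmerge (notMem_Cafter π i), natCast_sub_card_Cafter]
  have hblock : ∀ T ∈ P.erase ∅, ∏ i ∈ univ.filter (fun a => blockOf P a = T),
      wMStNumerator (blockOf P i \ Cafter π i).card = ((T.card - 1).factorial : ℝ) := by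
    intro T hT
    have hTP := mem_of_mem_erase hT
    rw [hP.filter_blockOf_eq hTP,
      prod_congr rfl fun i hi => by rw [hP.blockOf_eq hTP hi, sdiff_Cafter],
      prod_card_filter_le_apply π.symm.injective, prod_range_wMStNumerator]
  rw [pr, prod_congr rfl fun i _ => hfactor i, prod_div_distrib, prod_natCast_symm_add_one,
    ← prod_fiberwise_of_maps_to fun a _ => hP.blockOf_mem_erase_empty a, prod_congr rfl hblock]

namespace Equiv.Perm

variable {α ι : Type*}

theorem SameCycle.apply_eq_of_comp_eq [Finite α] {σ : Perm α} {f : α → ι} (hf : f ∘ σ = f)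
    {a b : α} (h : σ.SameCycle a b) : f a = f b := by
  obtain ⟨k, rfl⟩ := h.exists_nat_pow_eq
  clear h
  induction k with
  | zero => rfl
  | succ k ih => rw [pow_succ', mul_apply, ih]; exact (congrFun hf _).symm

theorem forall_sameCycle_iff_cycleType [Fintype α] [Nontrivial α] {c : Perm α} :
    (∀ a b, c.SameCycle a b) ↔ c.cycleType = {Fintype.card α} := by
  constructor
  · intro h
    have hsupp : c.support = univ := eq_univ_of_forall fun a => mem_support.2 fun ha => by
      obtain ⟨b, hb⟩ := exists_ne a
      exact hb ((h a b).eq_of_left ha).symm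
    obtain ⟨a⟩ := ‹Nontrivial α›.to_nonempty
    have hcycle : c.IsCycle := ⟨a, mem_support.1 (hsupp ▸ mem_univ a), fun y _ => h a y⟩
    rw [hcycle.cycleType, hsupp, card_univ]
  · intro hc a b
    have hcycle : c.IsCycle := card_cycleType_eq_one.1 (by simp [hc])
    have hsupp : c.support = univ :=
      eq_univ_of_card _ (by rw [← sum_cycleType, hc, Multiset.sum_singleton])
    exact hcycle.sameCycle (mem_support.1 (hsupp ▸ mem_univ a))
      (mem_support.1 (hsupp ▸ mem_univ b))

theorem card_forall_sameCycle [Finite α] :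
    Nat.card {c : Perm α // ∀ a b, c.SameCycle a b} = (Nat.card α - 1).factorial := by
  cases nonempty_fintype α
  rcases subsingleton_or_nontrivial α with hα | hα
  · have hall : ∀ c : Perm α, ∀ a b, c.SameCycle a b :=
      fun c a b => Subsingleton.elim a b ▸ .refl _ _
    have hcard : Nat.card α ≤ 1 := Finite.card_le_one_iff_subsingleton.2 hα
    rw [Nat.card_congr (Equiv.subtypeUnivEquiv hall), Nat.card_perm,
      Nat.factorial_eq_one.2 hcard, Nat.factorial_eq_one.2 (by omega)]
  · rw [Nat.subtype_card _ fun c => (mem_filter_univ c).trans forall_sameCycle_iff_cycleType.symm,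
      card_of_cycleType_singleton Fintype.one_lt_card le_rfl, Nat.choose_self, mul_one,
      Nat.card_eq_fintype_card]

theorem forall_sameCycle_iff_eq_iff [Finite α] {σ : Perm α} {f : α → ι} :
    (∀ a b, σ.SameCycle a b ↔ f a = f b) ↔
      f ∘ σ = f ∧ ∀ i (x y : {a // f a = i}), σ.SameCycle x y := by
  constructor
  · intro h
    exact ⟨funext fun a => (h (σ a) a).1 (sameCycle_apply_left.2 .rfl),
      fun i x y => (h x y).2 (x.2.trans y.2.symm)⟩
  · rintro ⟨hf, hfiber⟩ a b
    exact ⟨SameCycle.apply_eq_of_comp_eq hf, fun hab => hfiber (f b) ⟨a, hab⟩ ⟨b, rfl⟩⟩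

theorem card_sameCycle_iff_eq [Finite α] [Fintype ι] (f : α → ι) :
    Nat.card {σ : Perm α // ∀ a b, σ.SameCycle a b ↔ f a = f b} =
      ∏ i, (Nat.card {a // f a = i} - 1).factorial := by
  -- restrict a fibre-preserving permutation to each fibre
  let E : {g : Perm α // f ∘ g = f} ≃ ∀ i, Perm {a // f a = i} :=
    ((Equiv.subtypeEquiv DomMulAct.mk fun _ => Iff.rfl).trans MulOpposite.opEquiv).trans
      (DomMulAct.stabilizerMulEquiv f).toEquiv
  calc _ = Nat.card {σ : Perm α // f ∘ σ = f ∧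
          ∀ i (x y : {a // f a = i}), σ.SameCycle x y} :=
        Nat.card_congr (Equiv.subtypeEquivRight fun _ => forall_sameCycle_iff_eq_iff)
    _ = Nat.card {g : {g : Perm α // f ∘ g = f} //
          ∀ i (x y : {a // f a = i}), g.1.SameCycle x y} :=
        Nat.card_congr (Equiv.subtypeSubtypeEquivSubtypeInter _ _).symm
    _ = Nat.card {h : ∀ i, Perm {a // f a = i} // ∀ i x y, (h i).SameCycle x y} :=
        Nat.card_congr (E.subtypeEquiv fun g =>
          forall_congr' fun i => forall₂_congr fun x y =>
            (sameCycle_subtypePerm (h := fun a => by rw [← congrFun g.2 a]; rfl)).symm)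
    _ = Nat.card (∀ i, {c : Perm {a // f a = i} // ∀ x y, c.SameCycle x y}) :=
        Nat.card_congr
          (Equiv.subtypePiEquivPi (p := fun i (c : Perm {a // f a = i}) => ∀ x y, c.SameCycle x y))
    _ = _ := by simp only [Nat.card_pi, card_forall_sameCycle]

end Equiv.Perm

section cyclePartition

variable {n : ℕ} {P : Finset (Finset (Fin n))}

theorem cyclePartition_eq_iff (hP : IsPartition P) (σ : Equiv.Perm (Fin n)) :
    cyclePartition σ = P ↔ ∀ a b, σ.SameCycle a b ↔ blockOf P a = blockOf P b := by
  have horbit : (∀ a b, σ.SameCycle a b ↔ blockOf P a = blockOf P b) ↔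
      (fun a => univ.filter fun b => σ.SameCycle a b) = blockOf P := by
    rw [funext_iff]
    refine forall_congr' fun a => ?_
    rw [Finset.ext_iff]
    refine forall_congr' fun b => ?_
    rw [mem_filter, hP.mem_blockOf_iff, and_iff_right (mem_univ b)]
  rw [horbit]
  constructor
  · intro h
    funext a
    refine (hP.blockOf_eq ?_ (mem_filter.2 ⟨mem_univ a, .refl _ _⟩)).symm
    rw [← h]
    exact mem_insert_of_mem (mem_image_of_mem _ (mem_univ a))
  · intro h
    rw [cyclePartition, h, hP.insert_empty_image_blockOf]

theorem card_cyclePartition_eq (hP : IsPartition P) :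
    (univ.filter fun σ : Equiv.Perm (Fin n) => cyclePartition σ = P).card =
      ∏ T ∈ P.erase ∅, (T.card - 1).factorial := by
  have hfiber : ∀ T ∈ P, Nat.card {a // blockOf P a = T} = T.card := fun T hT =>
    Nat.subtype_card T fun a => ⟨hP.blockOf_eq hT, fun h => h ▸ hP.mem_blockOf a⟩
  rw [← Nat.subtype_card _ fun σ => mem_filter_univ σ,
    Nat.card_congr (Equiv.subtypeEquivRight (cyclePartition_eq_iff hP)),
    Equiv.Perm.card_sameCycle_iff_eq, ← prod_subset (subset_univ (P.erase ∅))]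
  · exact prod_congr rfl fun T hT => by rw [hfiber T (mem_of_mem_erase hT)]
  · intro T _ hT
    have : IsEmpty {a // blockOf P a = T} := ⟨fun a => hT (a.2 ▸ hP.blockOf_mem_erase_empty a)⟩
    rw [Nat.card_of_isEmpty, Nat.zero_sub, Nat.factorial_zero]

end cyclePartition

/-- Under the Macho-Stadler et al. weights, for every permutation `π` the
induced probability of a partition `P` is `(∏_{T∈P} (|T|−1)!)/n!`, which is
the probability that a uniformly random permutation of `N` has cycle-type
partition `P`. -/
theorem stmt15 (n : ℕ) (π : Equiv.Perm (Fin n)) (P : Finset (Finset (Fin n)))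
    (hP : IsPartition P) :
    pr (wMSt n) π P =
      (∏ T ∈ P.erase ∅, ((T.card - 1).factorial : ℝ)) / (n.factorial : ℝ) ∧
    pr (wMSt n) π P =
      ((Finset.univ.filter fun σ : Equiv.Perm (Fin n) => cyclePartition σ = P).card : ℝ) /
        (n.factorial : ℝ) := by
  refine ⟨pr_wMSt π hP, ?_⟩
  rw [pr_wMSt π hP, card_cyclePartition_eq hP, Nat.cast_prod]
end

section
/- For the Hu–Yang weights α^{HY}, the induced probability is uniform over partitions: pr^{α^{HY}}_π(P) = 1/B(n) for every permutation π and every partition P of N, where B(n) is the Bell number. -/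
open Finset

open scoped Classical

/-- The Hu–Yang weights: `α^{HY}_i(S,P)` is the ratio of the number of
partitions `P̃` with `P̃_{[S]} = P` to the number of partitions `P̃` with
`P̃_{[S∪{i}]} = P_{[S∪{i}]}`. -/
noncomputable def wHY (n : ℕ) : Weights n := fun i S P =>
  (((allPartitions n).filter fun Q => pmerge Q S = P).card : ℝ) /
    (((allPartitions n).filter fun Q =>
        pmerge Q (insert i S) = pmerge P (insert i S)).card : ℝ)

lemma pmerge_pmerge {n : ℕ} (P : Finset (Finset (Fin n))) (S T : Finset (Fin n))
    (h0 : ∅ ∈ P) (hST : S ⊆ T) : pmerge (pmerge P S) T = pmerge P T := by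
  have hb : ∀ b : Finset (Fin n), (b \ S) \ T = b \ T := by
    intro b; ext x
    simp only [Finset.mem_sdiff]
    constructor
    · rintro ⟨⟨h1, _⟩, h3⟩; exact ⟨h1, h3⟩
    · rintro ⟨h1, h3⟩; exact ⟨⟨h1, fun h => h3 (hST h)⟩, h3⟩
  have hS : S \ T = ∅ := Finset.sdiff_eq_empty_iff_subset.mpr hST
  have h0' : ∅ ∈ P.image (· \ T) := Finset.mem_image.mpr ⟨∅, h0, by simp⟩
  unfold pmerge
  rw [Finset.image_union, Finset.image_image, Finset.image_singleton, hS]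
  have himg : P.image ((· \ T) ∘ (· \ S)) = P.image (· \ T) := by
    apply Finset.image_congr
    intro b _
    simpa using hb b
  rw [himg]
  congr 1
  exact Finset.union_eq_left.mpr (Finset.singleton_subset_iff.mpr h0')

lemma pmerge_empty {n : ℕ} (Q : Finset (Finset (Fin n))) (h0 : ∅ ∈ Q) :
    pmerge Q ∅ = Q := by
  unfold pmerge
  have : Q.image (· \ ∅) = Q := by
    rw [show (· \ (∅ : Finset (Fin n))) = id from funext fun b => Finset.sdiff_empty]
    exact Finset.image_id
  rw [this]
  exact Finset.union_eq_left.mpr (Finset.singleton_subset_iff.mpr h0)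

lemma pmerge_univ {n : ℕ} (Q : Finset (Finset (Fin n))) (h0 : ∅ ∈ Q) :
    pmerge Q Finset.univ = {∅, Finset.univ} := by
  unfold pmerge
  have : Q.image (· \ Finset.univ) = {∅} := by
    rw [show (· \ (Finset.univ : Finset (Fin n))) = (fun _ => (∅ : Finset (Fin n))) from
      funext fun b => Finset.sdiff_eq_empty_iff_subset.mpr (Finset.subset_univ b)]
    exact Finset.image_const ⟨∅, h0⟩ _
  rw [this]
  ext B
  simp

lemma prod_div_telescope' (F : ℕ → ℝ) (hF : ∀ m, F m ≠ 0) (n : ℕ) :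
    ∏ k ∈ Finset.range n, F (k + 1) / F k = F n / F 0 := by
  induction n with
  | zero => simp [div_self (hF 0)]
  | succ m ih =>
    rw [Finset.prod_range_succ, ih, div_mul_div_comm, mul_comm (F 0) (F m)]
    rw [mul_div_mul_left _ _ (hF m)]

/-- For the Hu–Yang weights, the induced probability is uniform over the
partitions of `N`: it equals `1/B(n)` where the Bell number `B(n)` is the
number of partitions of `N`. -/
theorem stmt16 (n : ℕ) (π : Equiv.Perm (Fin n)) (P : Finset (Finset (Fin n)))
    (hP : IsPartition P) :
    pr (wHY n) π P = 1 / ((allPartitions n).card : ℝ) := by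
  classical
  have hPmem : P ∈ allPartitions n := Finset.mem_filter.mpr ⟨Finset.mem_univ _, hP⟩
  set g : Finset (Fin n) → ℝ := fun S =>
    (((allPartitions n).filter fun Q => pmerge Q S = pmerge P S).card : ℝ) with hg
  have hgne : ∀ S, g S ≠ 0 := by
    intro S
    simp only [hg, Nat.cast_ne_zero]
    exact Finset.card_ne_zero_of_mem (Finset.mem_filter.mpr ⟨hPmem, rfl⟩)
  set T : ℕ → Finset (Fin n) := fun m => Finset.univ.filter fun j => m ≤ (π.symm j : ℕ)
    with hT
  have hC : ∀ k : Fin n, Cafter π (π k) = T ((k : ℕ) + 1) := by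
    intro k; ext j
    simp only [Cafter, hT, Finset.mem_filter, Finset.mem_univ, true_and,
      Equiv.symm_apply_apply, Fin.lt_def]
    omega
  have hins : ∀ k : Fin n, insert (π k) (T ((k : ℕ) + 1)) = T (k : ℕ) := by
    intro k; ext j
    simp only [Finset.mem_insert, hT, Finset.mem_filter, Finset.mem_univ, true_and]
    constructor
    · rintro (rfl | h)
      · simp
      · omega
    · intro h
      rcases eq_or_lt_of_le h with heq | hlt
      · left
        have hje : π.symm j = k := Fin.ext heq.symm
        rw [← hje, Equiv.apply_symm_apply]
      · right; omega
  have hstep : ∀ k : Fin n,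
      wHY n (π k) (Cafter π (π k)) (pmerge P (Cafter π (π k))) =
        g (T ((k : ℕ) + 1)) / g (T (k : ℕ)) := by
    intro k
    rw [hC k]
    unfold wHY
    rw [pmerge_pmerge P (T ((k : ℕ) + 1)) _ hP.1 (Finset.subset_insert _ _), hins k]
  have hT0 : T 0 = Finset.univ := by
    ext j; simp [hT]
  have hTn : T n = ∅ := by
    ext j
    simp only [hT, Finset.mem_filter, Finset.mem_univ, true_and, Finset.notMem_empty,
      iff_false, not_le]
    exact (π.symm j).isLt
  have hgtop : g Finset.univ = ((allPartitions n).card : ℝ) := by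
    have hall : ∀ Q ∈ allPartitions n, pmerge Q Finset.univ = pmerge P Finset.univ := by
      intro Q hQ
      have hQ0 : ∅ ∈ Q := ((Finset.mem_filter.mp hQ).2).1
      rw [pmerge_univ Q hQ0, pmerge_univ P hP.1]
    simp only [hg]
    rw [Finset.filter_true_of_mem hall]
  have hgbot : g ∅ = 1 := by
    have hone : ((allPartitions n).filter fun Q => pmerge Q ∅ = pmerge P ∅) = {P} := by
      ext Q
      simp only [Finset.mem_filter, Finset.mem_singleton]
      constructor
      · rintro ⟨hQ, h⟩
        have hQ0 : ∅ ∈ Q := ((Finset.mem_filter.mp hQ).2).1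
        rwa [pmerge_empty Q hQ0, pmerge_empty P hP.1] at h
      · rintro rfl; exact ⟨hPmem, rfl⟩
    simp only [hg]
    rw [hone]
    simp
  calc pr (wHY n) π P
      = ∏ k : Fin n, wHY n (π k) (Cafter π (π k)) (pmerge P (Cafter π (π k))) :=
        (Equiv.prod_comp π _).symm
    _ = ∏ k : Fin n, g (T ((k : ℕ) + 1)) / g (T (k : ℕ)) :=
        Finset.prod_congr rfl fun k _ => hstep k
    _ = ∏ m ∈ Finset.range n, g (T (m + 1)) / g (T m) :=
        Fin.prod_univ_eq_prod_range (fun m => g (T (m + 1)) / g (T m)) n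
    _ = g (T n) / g (T 0) := prod_div_telescope' (fun m => g (T m)) (fun m => hgne _) n
    _ = 1 / ((allPartitions n).card : ℝ) := by
        rw [hTn, hT0, hgbot, hgtop]
end

section
/- In the sequential uniform-random-partition process, the probability that player k+1 starts a new block, given a partial partition of the first k players into j blocks, equals the ratio of the number of partitions of N extending the partial partition with k+1 in a new block to the number extending it arbitrarily, and this ratio depends only on k and j, not on the partial partition itself; moreover this ratio is at least 1/|N|. -/
open Finset

open scoped Classical

/-- A partial partition of the subset `K` of the players (with `∅` included,
as for full partitions). -/
def IsPartialPartition {n : ℕ} (K : Finset (Fin n)) (Q : Finset (Finset (Fin n))) :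
    Prop :=
  ∅ ∈ Q ∧ (∀ B ∈ Q, B ⊆ K) ∧ ∀ a ∈ K, ∃! B, B ∈ Q ∧ a ∈ B

/-- The partitions of `N` that cover (restrict to) the partial partition `Q`
of `K`. -/
noncomputable def covers (n : ℕ) (K : Finset (Fin n)) (Q : Finset (Finset (Fin n))) :
    Finset (Finset (Finset (Fin n))) :=
  (allPartitions n).filter fun P => P.image (· ∩ K) = Q

/-!
Let `coverCount m j` be the number of partitions of a set that extend `j` given nonempty blocks by
`m` further elements. The first free element either joins one of the `j` blocks or opens a new
one, whence `coverCount (m + 1) j = j * coverCount m j + coverCount m (j + 1)`. So a partial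
partition of the first `k` players into `j` blocks has `coverCount (n - k) j` covers, of which
`coverCount (n - k - 1) (j + 1)` put player `k + 1` in a new block; both depend on `(k, j)` only.
As `coverCount m` is monotone in `j`, `coverCount (m + 1) j ≤ (j + 1) * coverCount m (j + 1)`,
and `j + 1 ≤ k + 1 ≤ n` gives the bound `1 / n`.
-/

def coverCount : ℕ → ℕ → ℕ
  | 0, _ => 1
  | m + 1, j => j * coverCount m j + coverCount m (j + 1)

lemma coverCount_pos : ∀ m j, 0 < coverCount m j
  | 0, _ => Nat.one_pos
  | m + 1, j => Nat.add_pos_right _ (coverCount_pos m (j + 1))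

lemma coverCount_le_coverCount_succ : ∀ m j, coverCount m j ≤ coverCount m (j + 1)
  | 0, _ => le_rfl
  | m + 1, j =>
    add_le_add (Nat.mul_le_mul j.le_succ (coverCount_le_coverCount_succ m j))
      (coverCount_le_coverCount_succ m (j + 1))

lemma coverCount_succ_le (m j : ℕ) : coverCount (m + 1) j ≤ (j + 1) * coverCount m (j + 1) := by
  rw [coverCount, add_one_mul]
  gcongr
  exact coverCount_le_coverCount_succ m j

lemma one_div_le_coverCount_div {m j N : ℕ} (hN : j + 1 ≤ N) :
    1 / (N : ℝ) ≤ coverCount m (j + 1) / coverCount (m + 1) j := by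
  have hpos : (0 : ℝ) < coverCount (m + 1) j := by exact_mod_cast coverCount_pos _ _
  rw [div_le_div_iff₀ (by exact_mod_cast (by omega : 0 < N)) hpos, one_mul]
  calc (coverCount (m + 1) j : ℝ) ≤ (j + 1) * coverCount m (j + 1) := by
        exact_mod_cast coverCount_succ_le m j
    _ ≤ coverCount m (j + 1) * N := by
        rw [mul_comm]
        gcongr
        exact_mod_cast hN

section

variable {n : ℕ} {K : Finset (Fin n)} {Q : Finset (Finset (Fin n))} {a : Fin n}
  {B B' : Finset (Fin n)}

lemma IsPartition.eq_of_mem {P : Finset (Finset (Fin n))} (hP : IsPartition P) (hB : B ∈ P)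
    (hB' : B' ∈ P) {x : Fin n} (hx : x ∈ B) (hx' : x ∈ B') : B = B' :=
  (hP.2 x).unique ⟨hB, hx⟩ ⟨hB', hx'⟩

lemma IsPartialPartition.eq_of_mem (hQ : IsPartialPartition K Q) (hB : B ∈ Q) (hB' : B' ∈ Q)
    {x : Fin n} (hx : x ∈ B) (hx' : x ∈ B') : B = B' :=
  (hQ.2.2 x (hQ.2.1 B hB hx)).unique ⟨hB, hx⟩ ⟨hB', hx'⟩

lemma IsPartialPartition.notMem_of_mem (hQ : IsPartialPartition K Q) (ha : a ∉ K) (hB : B ∈ Q) :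
    a ∉ B :=
  fun h => ha (hQ.2.1 B hB h)

lemma IsPartialPartition.card_sub_one_le (hQ : IsPartialPartition K Q) : Q.card - 1 ≤ K.card := by
  rw [← card_erase_of_mem hQ.1]
  calc (Q.erase ∅).card ≤ ((Q.erase ∅).biUnion id).card := by
        refine card_le_card_biUnion (fun B hB B' hB' hne => disjoint_left.2 fun x hx hx' => ?_)
          fun B hB => nonempty_iff_ne_empty.2 (ne_of_mem_erase hB)
        exact hne (hQ.eq_of_mem (mem_of_mem_erase hB) (mem_of_mem_erase hB') hx hx')
    _ ≤ K.card := card_le_card <| biUnion_subset.2 fun B hB => hQ.2.1 B (mem_of_mem_erase hB)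

/-- `a` joins the block `B` of `Q`, or opens the new block `{a}` when `B = ∅`. -/
def placeIn (a : Fin n) (Q : Finset (Finset (Fin n))) (B : Finset (Fin n)) :
    Finset (Finset (Fin n)) :=
  insert ∅ (insert (insert a B) (Q.erase B))

lemma placeIn_empty (hQ : ∅ ∈ Q) : placeIn a Q ∅ = insert {a} Q := by
  rw [placeIn, insert_comm, insert_empty, insert_erase hQ]

lemma IsPartialPartition.eq_insert_of_mem_placeIn (hQ : IsPartialPartition K Q) (ha : a ∉ K)
    {X : Finset (Fin n)} (hX : X ∈ placeIn a Q B) (haX : a ∈ X) : X = insert a B := by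
  rcases mem_insert.1 hX with rfl | hX
  · exact absurd haX (notMem_empty a)
  rcases mem_insert.1 hX with rfl | hX
  · rfl
  · exact absurd haX (hQ.notMem_of_mem ha (mem_of_mem_erase hX))

lemma IsPartialPartition.placeIn_injOn (hQ : IsPartialPartition K Q) (ha : a ∉ K) (hB : B ∈ Q)
    (hB' : B' ∈ Q) (h : placeIn a Q B = placeIn a Q B') : B = B' := by
  have hmem : insert a B ∈ placeIn a Q B' := h ▸ mem_insert_of_mem (mem_insert_self _ _)
  have := congrArg (·.erase a) (hQ.eq_insert_of_mem_placeIn ha hmem (mem_insert_self a B))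
  simpa only [erase_insert (hQ.notMem_of_mem ha hB), erase_insert (hQ.notMem_of_mem ha hB')]
    using this

lemma IsPartialPartition.card_placeIn (hQ : IsPartialPartition K Q) (ha : a ∉ K) (hB : B ∈ Q)
    (hB0 : B ≠ ∅) : (placeIn a Q B).card = Q.card := by
  rw [placeIn, insert_eq_of_mem (mem_insert_of_mem (mem_erase.2 ⟨hB0.symm, hQ.1⟩)),
    card_insert_of_notMem, card_erase_add_one hB]
  exact fun h => hQ.notMem_of_mem ha (mem_of_mem_erase h) (mem_insert_self a B)

lemma IsPartialPartition.card_insert_singleton (hQ : IsPartialPartition K Q) (ha : a ∉ K) :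
    (insert {a} Q).card = Q.card + 1 :=
  card_insert_of_notMem fun h => hQ.notMem_of_mem ha h (mem_singleton_self a)

lemma isPartialPartition_placeIn (hQ : IsPartialPartition K Q) (ha : a ∉ K) (hB : B ∈ Q) :
    IsPartialPartition (insert a K) (placeIn a Q B) := by
  refine ⟨mem_insert_self _ _, fun C hC => ?_, fun x hx => ?_⟩
  · rcases mem_insert.1 hC with rfl | hC
    · exact empty_subset _
    rcases mem_insert.1 hC with rfl | hC
    · exact insert_subset_insert a (hQ.2.1 B hB)
    · exact (hQ.2.1 C (mem_of_mem_erase hC)).trans (subset_insert a K)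
  rcases mem_insert.1 hx with rfl | hxK
  · exact ⟨insert x B, ⟨mem_insert_of_mem (mem_insert_self _ _), mem_insert_self _ _⟩,
      fun C ⟨hC, hxC⟩ => hQ.eq_insert_of_mem_placeIn ha hC hxC⟩
  have hxa : x ≠ a := fun h => ha (h ▸ hxK)
  obtain ⟨C, ⟨hC, hxC⟩, -⟩ := hQ.2.2 x hxK
  by_cases hxB : x ∈ B
  · refine ⟨insert a B, ⟨mem_insert_of_mem (mem_insert_self _ _), mem_insert_of_mem hxB⟩, ?_⟩
    rintro X ⟨hX, hxX⟩
    rcases mem_insert.1 hX with rfl | hX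
    · exact absurd hxX (notMem_empty x)
    rcases mem_insert.1 hX with rfl | hX
    · rfl
    · exact absurd (hQ.eq_of_mem (mem_of_mem_erase hX) hB hxX hxB) (ne_of_mem_erase hX)
  · have hCB : C ≠ B := fun h => hxB (h ▸ hxC)
    refine ⟨C, ⟨mem_insert_of_mem (mem_insert_of_mem (mem_erase.2 ⟨hCB, hC⟩)), hxC⟩, ?_⟩
    rintro X ⟨hX, hxX⟩
    rcases mem_insert.1 hX with rfl | hX
    · exact absurd hxX (notMem_empty x)
    rcases mem_insert.1 hX with rfl | hX
    · exact absurd ((mem_insert.1 hxX).resolve_left hxa) hxB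
    · exact hQ.eq_of_mem (mem_of_mem_erase hX) hC hxX hxC

lemma IsPartialPartition.image_erase_placeIn (hQ : IsPartialPartition K Q) (ha : a ∉ K)
    (hB : B ∈ Q) : (placeIn a Q B).image (·.erase a) = Q := by
  have hfix : ∀ C ∈ Q.erase B, C.erase a = id C :=
    fun C hC => erase_eq_of_notMem (hQ.notMem_of_mem ha (mem_of_mem_erase hC))
  rw [placeIn, image_insert, image_insert, erase_empty, erase_insert (hQ.notMem_of_mem ha hB),
    image_congr hfix, image_id, insert_erase hB, insert_eq_of_mem hQ.1]

lemma image_inter_insert_eq_placeIn {P : Finset (Finset (Fin n))} (hP : IsPartition P)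
    {C : Finset (Fin n)} (hC : C ∈ P) (haC : a ∈ C) :
    P.image (· ∩ insert a K) = placeIn a (P.image (· ∩ K)) (C ∩ K) := by
  ext X
  simp only [placeIn, mem_insert, mem_erase, mem_image]
  constructor
  · rintro ⟨Y, hY, rfl⟩
    by_cases haY : a ∈ Y
    · rw [hP.eq_of_mem hY hC haY haC, inter_insert_of_mem haC]
      exact Or.inr (Or.inl rfl)
    rw [inter_insert_of_notMem haY]
    obtain hY0 | ⟨x, hx⟩ := (Y ∩ K).eq_empty_or_nonempty
    · exact Or.inl hY0
    refine Or.inr (Or.inr ⟨fun hYC => haY ?_, Y, hY, rfl⟩)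
    have hxC : x ∈ C := (mem_inter.1 (hYC ▸ hx)).1
    rw [hP.eq_of_mem hY hC (mem_inter.1 hx).1 hxC]
    exact haC
  · rintro (rfl | rfl | ⟨hne, Y, hY, rfl⟩)
    · exact ⟨∅, hP.1, empty_inter _⟩
    · exact ⟨C, hC, inter_insert_of_mem haC⟩
    · have haY : a ∉ Y := fun haY => hne (by rw [hP.eq_of_mem hY hC haY haC])
      exact ⟨Y, hY, inter_insert_of_notMem haY⟩

lemma covers_eq_biUnion (hQ : IsPartialPartition K Q) (ha : a ∉ K) :
    covers n K Q = Q.biUnion fun B => covers n (insert a K) (placeIn a Q B) := by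
  ext P
  simp only [covers, allPartitions, mem_biUnion, mem_filter, mem_univ, true_and]
  constructor
  · rintro ⟨hP, rfl⟩
    obtain ⟨C, ⟨hC, haC⟩, -⟩ := hP.2 a
    exact ⟨C ∩ K, mem_image_of_mem _ hC, hP, image_inter_insert_eq_placeIn hP hC haC⟩
  · rintro ⟨B, hB, hP, hPQ⟩
    refine ⟨hP, ?_⟩
    rw [← hQ.image_erase_placeIn ha hB, ← hPQ, image_image]
    exact image_congr fun Y _ => by
      simp only [Function.comp_apply, ← inter_erase, erase_insert ha]

lemma covers_univ (hQ : IsPartialPartition univ Q) : covers n univ Q = {Q} := by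
  have hQP : IsPartition Q := ⟨hQ.1, fun x => hQ.2.2 x (mem_univ x)⟩
  ext P
  simp only [covers, allPartitions, mem_filter, mem_univ, true_and, inter_univ, image_id',
    mem_singleton]
  exact ⟨And.right, fun h => ⟨h ▸ hQP, h⟩⟩

/-- `∅` counts as a block of `Q`, so `Q` has `Q.card - 1` nonempty blocks. -/
theorem card_covers (m : ℕ) (hQ : IsPartialPartition K Q) (hm : Kᶜ.card = m) :
    (covers n K Q).card = coverCount m (Q.card - 1) := by
  induction m generalizing K Q with
  | zero =>
    obtain rfl : K = univ := compl_eq_empty_iff _ |>.1 (card_eq_zero.1 hm)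
    rw [covers_univ hQ, card_singleton, coverCount]
  | succ m ih =>
    obtain ⟨a, ha⟩ : Kᶜ.Nonempty := card_pos.1 (by omega)
    have haK : a ∉ K := mem_compl.1 ha
    have hm' : (insert a K)ᶜ.card = m := by
      rw [compl_insert, card_erase_of_mem ha, hm, Nat.add_sub_cancel]
    have hdisj : (Q : Set (Finset (Fin n))).PairwiseDisjoint
        fun B => covers n (insert a K) (placeIn a Q B) := by
      intro B hB B' hB' hne
      refine disjoint_left.2 fun P hP hP' => hne (hQ.placeIn_injOn haK hB hB' ?_)
      exact (mem_filter.1 hP).2.symm.trans (mem_filter.1 hP').2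
    have hjoin : ∀ B ∈ Q.erase ∅, (covers n (insert a K) (placeIn a Q B)).card =
        coverCount m (Q.card - 1) := fun B hB => by
      rw [ih (isPartialPartition_placeIn hQ haK (mem_of_mem_erase hB)) hm',
        hQ.card_placeIn haK (mem_of_mem_erase hB) (ne_of_mem_erase hB)]
    have hnew : (covers n (insert a K) (placeIn a Q ∅)).card = coverCount m Q.card := by
      rw [ih (isPartialPartition_placeIn hQ haK hQ.1) hm', placeIn_empty hQ.1,
        hQ.card_insert_singleton haK, Nat.add_sub_cancel]
    obtain ⟨j, hj⟩ : ∃ j, Q.card = j + 1 := Nat.exists_eq_add_one.2 (card_pos.2 ⟨∅, hQ.1⟩)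
    rw [covers_eq_biUnion hQ haK, card_biUnion hdisj, ← add_sum_erase _ _ hQ.1, hnew,
      sum_congr rfl hjoin, sum_const, card_erase_of_mem hQ.1, smul_eq_mul, hj, coverCount,
      Nat.add_sub_cancel, add_comm]

end

/-- In the sequential uniform-random-partition process: the number of
partitions of `N` covering a partial partition of the first `k` players
(and the number of those in which player `k+1` additionally starts a new
block) depends only on `k` and on the number `j` of blocks, not on the
partial partition itself; moreover the ratio, i.e. the probability that
player `k+1` starts a new block, is at least `1/n`. -/
theorem stmt17 (n k : ℕ) (hk : k < n)
    (Q : Finset (Finset (Fin n)))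
    (hQ : IsPartialPartition (Finset.univ.filter fun a : Fin n => (a : ℕ) < k) Q) :
    (∀ Q', IsPartialPartition (Finset.univ.filter fun a : Fin n => (a : ℕ) < k) Q' →
      Q'.card = Q.card →
        (covers n (Finset.univ.filter fun a : Fin n => (a : ℕ) < k) Q).card =
          (covers n (Finset.univ.filter fun a : Fin n => (a : ℕ) < k) Q').card ∧
        (covers n (insert ⟨k, hk⟩ (Finset.univ.filter fun a : Fin n => (a : ℕ) < k))
            (insert {⟨k, hk⟩} Q)).card =
          (covers n (insert ⟨k, hk⟩ (Finset.univ.filter fun a : Fin n => (a : ℕ) < k))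
            (insert {⟨k, hk⟩} Q')).card) ∧
    (1 / (n : ℝ) ≤
      ((covers n (insert ⟨k, hk⟩ (Finset.univ.filter fun a : Fin n => (a : ℕ) < k))
          (insert {⟨k, hk⟩} Q)).card : ℝ) /
        ((covers n (Finset.univ.filter fun a : Fin n => (a : ℕ) < k) Q).card : ℝ)) := by
  set K := Finset.univ.filter fun a : Fin n => (a : ℕ) < k
  set a : Fin n := ⟨k, hk⟩
  have haK : a ∉ K := by simp [K, a]
  have hK : K = Iio a := by ext x; simp [K, a, Fin.lt_def]
  obtain ⟨m, hm⟩ : ∃ m, n - k = m + 1 := ⟨n - k - 1, by omega⟩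
  have hKc : Kᶜ.card = m + 1 := by rw [card_compl, hK, Fin.card_Iio, Fintype.card_fin, hm]
  have hKc' : (insert a K)ᶜ.card = m := by
    rw [compl_insert, card_erase_of_mem (mem_compl.2 haK), hKc, Nat.add_sub_cancel]
  have hcov : ∀ Q', IsPartialPartition K Q' →
      (covers n K Q').card = coverCount (m + 1) (Q'.card - 1) := fun Q' hQ' =>
    card_covers _ hQ' hKc
  have hcov_new : ∀ Q', IsPartialPartition K Q' →
      (covers n (insert a K) (insert {a} Q')).card = coverCount m Q'.card := fun Q' hQ' => by
    rw [card_covers _ (placeIn_empty (a := a) hQ'.1 ▸ isPartialPartition_placeIn hQ' haK hQ'.1)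
      hKc', hQ'.card_insert_singleton haK, Nat.add_sub_cancel]
  refine ⟨fun Q' hQ' hcard => ?_, ?_⟩
  · rw [hcov Q hQ, hcov Q' hQ', hcov_new Q hQ, hcov_new Q' hQ', hcard]
    exact ⟨rfl, rfl⟩
  · obtain ⟨j, hj⟩ : ∃ j, Q.card = j + 1 := Nat.exists_eq_add_one.2 (card_pos.2 ⟨∅, hQ.1⟩)
    have hjk : j ≤ k := by simpa [hj, hK] using hQ.card_sub_one_le
    rw [hcov Q hQ, hcov_new Q hQ, hj, Nat.add_sub_cancel]
    exact one_div_le_coverCount_div (by omega)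
end
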